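/- For every R > 0 the kinetic energy of the profile on the ball B(0,R) satisfies the exact identity ∫_{B(0,R)} |w(z)|² dz = (R⁴/4) · ∫_0^{2π} |W(1,θ')|² dθ', where the left-hand integral is taken with respect to two-dimensional Lebesgue measure. In particular ∫_{B(0,R)} |w|² = C·R⁴ with C := (1/4)∫_0^{2π} |W(1,θ')|² dθ' independent of R. -/

import Mathlib

/-- The complex constant `A := −2ai/(a+i)`. -/
noncomputable def Aconst (a : ℝ) : ℂ := -2 * (a : ℂ) * Complex.I / ((a : ℂ) + Complex.I)

/-- The self-similar velocity profile
`W(r,θ) := e^{iθ} Σ_{k} (2a g_k/(r(a−i))) · conj( exp((2a/(a+i)) ln r) · e^{A(θ_k−θ)} ·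
e^{2πJ(r,θ,k)A}/(1−e^{2πA}) )`, where `J` is the winding-number function. -/
noncomputable def Wprof (a : ℝ) (M : ℕ) (g θs : Fin M → ℝ)
    (J : ℝ → ℝ → Fin M → ℤ) (r θ : ℝ) : ℂ :=
  Complex.exp (Complex.I * (θ : ℂ)) * ∑ k : Fin M,
    (2 * (a : ℂ) * (g k : ℂ) / ((r : ℂ) * ((a : ℂ) - Complex.I))) *
      (starRingEnd ℂ)
        (Complex.exp ((2 * (a : ℂ) / ((a : ℂ) + Complex.I)) * (Real.log r : ℂ)) *
          Complex.exp (Aconst a * ((θs k : ℂ) - (θ : ℂ))) *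
          (Complex.exp (2 * (Real.pi : ℂ) * (J r θ k : ℂ) * Aconst a) /
            (1 - Complex.exp (2 * (Real.pi : ℂ) * Aconst a))))

/-!
In polar coordinates the profile is self-similar along logarithmic spirals: since
`2a/(a+i) = 2 + A/a`, one has `W(r, θ) = e^{i ln r / a} · r · W(1, θ - ln r / a)`, the
winding number being unchanged by this shift. Hence `|w|²` at `r e^{iθ}` equals
`r² |W(1, θ - ln r / a)|²`; as `W(1, ·)` is `2π`-periodic, each circle of radius `r`
contributes `r³ ∫_0^{2π} |W(1, ·)|²`, and integrating `r³` over `(0, R)` gives `R⁴/4`.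
-/

open MeasureTheory Real Set Function

theorem integral_ball_eq_integral_polarCoord {E : Type*} [NormedAddCommGroup E] [NormedSpace ℝ E]
    (f : ℂ → E) (R : ℝ) :
    ∫ z in Metric.ball (0 : ℂ) R, f z =
      ∫ p in Ioo 0 R ×ˢ Ioo (-π) π, p.1 • f (Complex.polarCoord.symm p) := by
  have hball : ∀ p ∈ polarCoord.target, p.1 • (Metric.ball (0 : ℂ) R).indicator f
      (Complex.polarCoord.symm p) =
        (Iio R ×ˢ univ).indicator (fun p => p.1 • f (Complex.polarCoord.symm p)) p := by
    rintro ⟨r, θ⟩ ⟨hr, -⟩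
    have hmem : Complex.polarCoord.symm (r, θ) ∈ Metric.ball (0 : ℂ) R ↔
        (r, θ) ∈ Iio R ×ˢ univ := by
      simp [abs_of_pos (mem_Ioi.mp hr)]
    by_cases h : (r, θ) ∈ Iio R ×ˢ (univ : Set ℝ)
    · rw [indicator_of_mem (hmem.mpr h), indicator_of_mem h]
    · rw [indicator_of_notMem (mt hmem.mp h), indicator_of_notMem h, smul_zero]
  rw [← integral_indicator Metric.isOpen_ball.measurableSet,
    ← Complex.integral_comp_polarCoord_symm, setIntegral_congr_fun
      polarCoord.open_target.measurableSet hball,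
    setIntegral_indicator (measurableSet_Iio.prod MeasurableSet.univ), polarCoord_target,
    prod_inter_prod, inter_univ, Ioi_inter_Iio]

theorem Complex.polarCoord_symm_norm_arg {p : ℝ × ℝ} (hp : p ∈ Ioi 0 ×ˢ Ioo (-π) π) :
    ‖Complex.polarCoord.symm p‖ = p.1 ∧ (Complex.polarCoord.symm p).arg = p.2 := by
  have h := Complex.polarCoord.right_inv hp
  rw [Complex.polarCoord_apply] at h
  exact Prod.ext_iff.mp h

theorem Function.Periodic.intervalIntegral_comp_sub_eq {E : Type*} [NormedAddCommGroup E]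
    [NormedSpace ℝ E] {G : ℝ → E} {T : ℝ} (hG : Periodic G T) (t c : ℝ) :
    ∫ θ in t..t + T, G (θ - c) = ∫ θ in 0..T, G θ := by
  rw [intervalIntegral.integral_comp_sub_right, add_sub_right_comm,
    hG.intervalIntegral_add_eq (t - c) 0, zero_add]

theorem Function.Periodic.setIntegral_Ioo_comp_sub {E : Type*} [NormedAddCommGroup E]
    [NormedSpace ℝ E] {G : ℝ → E} (hG : Periodic G (2 * π)) (c : ℝ) :
    ∫ θ in Ioo (-π) π, G (θ - c) = ∫ θ in 0..2 * π, G θ := by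
  have h := hG.intervalIntegral_comp_sub_eq (-π) c
  rw [show -π + 2 * π = π by ring, intervalIntegral.integral_of_le (by linarith [pi_pos]),
    integral_Ioc_eq_integral_Ioo] at h
  exact h

section SpiralProfile

variable {G φ : ℝ → ℝ}

theorem Function.Periodic.integrableOn_Ioo_comp_sub (hG : Periodic G (2 * π))
    (hGint : IntervalIntegrable G volume 0 (2 * π)) (c : ℝ) :
    IntegrableOn (fun θ => G (θ - c)) (Ioo (-π) π) := by
  have h := (hG.intervalIntegrable₀ two_pi_pos.ne' hGint (-π - c) (π - c)).comp_sub_right c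
  simp only [sub_add_cancel] at h
  exact (intervalIntegrable_iff_integrableOn_Ioo_of_le (by linarith [pi_pos])).mp h

theorem integrableOn_pow_mul_comp_sub (n : ℕ) (hG : Measurable G) (hGper : Periodic G (2 * π))
    (hGint : IntervalIntegrable G volume 0 (2 * π)) (hφ : Measurable φ) (R : ℝ) :
    IntegrableOn (fun p : ℝ × ℝ => p.1 ^ n * G (p.2 - φ p.1))
      (Ioo 0 R ×ˢ Ioo (-π) π) := by
  have hmeas : Measurable fun p : ℝ × ℝ => p.1 ^ n * G (p.2 - φ p.1) := by fun_prop
  have hnorm : ∀ r, ∫ θ in Ioo (-π) π, ‖r ^ n * G (θ - φ r)‖ =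
      |r| ^ n * ∫ θ in 0..2 * π, ‖G θ‖ := by
    intro r
    simp only [norm_mul, norm_pow, Real.norm_eq_abs]
    rw [integral_const_mul]
    exact congrArg _ ((hGper.comp fun x : ℝ => |x|).setIntegral_Ioo_comp_sub (φ r))
  rw [IntegrableOn, Measure.volume_eq_prod, ← Measure.prod_restrict,
    integrable_prod_iff (by rw [Measure.prod_restrict]; exact hmeas.aestronglyMeasurable.restrict)]
  refine ⟨Filter.Eventually.of_forall fun r =>
    (hGper.integrableOn_Ioo_comp_sub hGint (φ r)).const_mul (r ^ n), ?_⟩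
  simp only [hnorm]
  exact ((continuous_abs.pow n).mul continuous_const).integrableOn_Icc.mono_set Ioo_subset_Icc_self

theorem integral_ball_eq_of_eq_norm_pow_mul (n : ℕ) {f : ℂ → ℝ} (hG : Measurable G)
    (hGper : Periodic G (2 * π)) (hGint : IntervalIntegrable G volume 0 (2 * π))
    (hφ : Measurable φ) (hf : ∀ z ≠ 0, f z = ‖z‖ ^ n * G (z.arg - φ ‖z‖)) {R : ℝ}
    (hR : 0 ≤ R) :
    ∫ z in Metric.ball (0 : ℂ) R, f z = R ^ (n + 2) / (n + 2) * ∫ θ in 0..2 * π, G θ := by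
  have hpolar : ∀ p ∈ Ioo 0 R ×ˢ Ioo (-π) π,
      p.1 • f (Complex.polarCoord.symm p) = p.1 ^ (n + 1) * G (p.2 - φ p.1) := by
    rintro p ⟨⟨hr, -⟩, hθ⟩
    obtain ⟨hnorm, harg⟩ := Complex.polarCoord_symm_norm_arg (p := p) ⟨hr, hθ⟩
    have hne : Complex.polarCoord.symm p ≠ 0 := by
      rw [← norm_ne_zero_iff, hnorm]; exact hr.ne'
    rw [hf _ hne, hnorm, harg, smul_eq_mul, pow_succ]
    ring
  have hint := integrableOn_pow_mul_comp_sub (n + 1) hG hGper hGint hφ R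
  rw [Measure.volume_eq_prod] at hint
  rw [integral_ball_eq_integral_polarCoord, setIntegral_congr_fun
    (measurableSet_Ioo.prod measurableSet_Ioo) hpolar, Measure.volume_eq_prod,
    setIntegral_prod _ hint]
  simp only [integral_const_mul, hGper.setIntegral_Ioo_comp_sub]
  rw [integral_mul_const, ← integral_Ioc_eq_integral_Ioo, ← intervalIntegral.integral_of_le hR,
    integral_pow]
  push_cast
  ring

end SpiralProfile

theorem Int.isLeast_floor_add_one (x : ℝ) : IsLeast {j : ℤ | x < j} (⌊x⌋ + 1) := by
  simp only [← Int.floor_lt, ← Int.add_one_le_iff]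
  exact isLeast_Ici

noncomputable def windingNumber {M : ℕ} (a : ℝ) (θs : Fin M → ℝ)
    (r θ : ℝ) (k : Fin M) : ℤ :=
  ⌊(θ - Real.log r / a - θs k) / (2 * π)⌋ + 1

section WindingNumber

variable {a : ℝ} {M : ℕ} (θs : Fin M → ℝ)

theorem isLeast_windingNumber (ha : 0 < a) (r θ : ℝ) (k : Fin M) :
    IsLeast {j : ℤ | 0 < a * (2 * π * j + θs k - θ) + Real.log r}
      (windingNumber a θs r θ k) := by
  have hset : {j : ℤ | 0 < a * (2 * π * j + θs k - θ) + Real.log r} =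
      {j : ℤ | (θ - Real.log r / a - θs k) / (2 * π) < j} := by
    ext j
    have hlog : a * (2 * π * j + θs k - θ) + Real.log r =
        a * (2 * π * j - (θ - Real.log r / a - θs k)) := by
      field_simp
      ring
    rw [mem_ofPred_eq, mem_ofPred_eq, div_lt_iff₀ two_pi_pos, hlog, mul_pos_iff_of_pos_left ha,
      sub_pos, mul_comm]
  rw [hset]
  exact Int.isLeast_floor_add_one _

theorem windingNumber_eq_one_sub_log (r θ : ℝ) :
    windingNumber a θs r θ = windingNumber a θs 1 (θ - Real.log r / a) := by
  funext k
  simp [windingNumber]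

theorem windingNumber_one_add_two_pi (θ : ℝ) (k : Fin M) :
    windingNumber a θs 1 (θ + 2 * π) k = windingNumber a θs 1 θ k + 1 := by
  simp only [windingNumber, Real.log_one, zero_div, sub_zero]
  rw [show (θ + 2 * π - θs k) / (2 * π) = (θ - θs k) / (2 * π) + 1 by
    field_simp; ring, Int.floor_add_one]

theorem lt_two_pi_mul_windingNumber_one (θ : ℝ) (k : Fin M) :
    θ - θs k < 2 * π * windingNumber a θs 1 θ k := by
  have h := Int.lt_floor_add_one ((θ - θs k) / (2 * π))
  rw [div_lt_iff₀ two_pi_pos] at h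
  simpa [windingNumber, mul_comm] using h

end WindingNumber

section Profile

theorem Aconst_re_neg {a : ℝ} (ha : 0 < a) : (Aconst a).re < 0 := by
  rw [Aconst, Complex.div_re]
  simp only [neg_mul, Complex.neg_re, Complex.mul_re, Complex.re_ofNat, Complex.ofReal_re,
    Complex.im_ofNat, Complex.ofReal_im, mul_zero, sub_zero, Complex.I_re, Complex.mul_im, zero_mul,
    add_zero, Complex.I_im, mul_one, sub_self, neg_zero, Complex.add_re, Complex.normSq_apply,
    Complex.add_im, zero_add, zero_div, Complex.neg_im]
  exact div_neg_of_neg_of_pos (by linarith) (by positivity)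

open Complex in
theorem Aconst_div_add_two {a : ℝ} (ha : a ≠ 0) :
    Aconst a / a + 2 = 2 * (a : ℂ) / ((a : ℂ) + I) := by
  have hI : (a : ℂ) + I ≠ 0 := fun h => by simpa using congrArg Complex.im h
  have ha' : (a : ℂ) ≠ 0 := by exact_mod_cast ha
  rw [Aconst]
  field_simp
  ring

open Complex in
theorem exp_mul_log_mul_exp_Aconst {a r : ℝ} (ha : a ≠ 0) (hr : 0 < r) (t θ : ℝ) :
    exp (2 * (a : ℂ) / ((a : ℂ) + I) * (Real.log r : ℂ)) *
        exp (Aconst a * ((t : ℂ) - (θ : ℂ))) =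
      (r : ℂ) ^ 2 * exp (Aconst a * ((t : ℂ) - ((θ - Real.log r / a : ℝ) : ℂ))) := by
  have ha' : (a : ℂ) ≠ 0 := by exact_mod_cast ha
  rw [← Aconst_div_add_two ha, ← Complex.exp_add, show (r : ℂ) = Complex.exp (Real.log r) by
    rw [← ofReal_exp, Real.exp_log hr], ← Complex.exp_nat_mul, ← Complex.exp_add]
  congr 1
  push_cast
  field_simp
  ring

variable {a : ℝ} {M : ℕ} (g θs : Fin M → ℝ)

theorem Wprof_congr_windingNumber {J : ℝ → ℝ → Fin M → ℤ} (ha : 0 < a)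
    (hJ : ∀ (r θ : ℝ) (k : Fin M), 0 < r →
      IsLeast {j : ℤ | 0 < a * (2 * Real.pi * (j : ℝ) + θs k - θ) + Real.log r} (J r θ k))
    {r : ℝ} (hr : 0 < r) (θ : ℝ) :
    Wprof a M g θs J r θ = Wprof a M g θs (windingNumber a θs) r θ := by
  have hJr : J r θ = windingNumber a θs r θ :=
    funext fun k => (hJ r θ k hr).unique (isLeast_windingNumber θs ha r θ k)
  rw [Wprof, Wprof, hJr]

open Complex in
theorem Wprof_windingNumber_eq_scale (ha : a ≠ 0) {r : ℝ} (hr : 0 < r) (θ : ℝ) :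
    Wprof a M g θs (windingNumber a θs) r θ =
      exp (I * (Real.log r / a : ℝ)) * r *
        Wprof a M g θs (windingNumber a θs) 1 (θ - Real.log r / a) := by
  have hr' : (r : ℂ) ≠ 0 := by exact_mod_cast hr.ne'
  have hexp : exp (I * θ) =
      exp (I * (Real.log r / a : ℝ)) * exp (I * (θ - Real.log r / a : ℝ)) := by
    rw [← Complex.exp_add]
    congr 1
    push_cast
    ring
  rw [Wprof, Wprof, windingNumber_eq_one_sub_log, hexp]
  simp only [exp_mul_log_mul_exp_Aconst ha hr, Real.log_one, ofReal_zero, ofReal_one, mul_zero,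
    Complex.exp_zero, one_mul, map_mul, map_pow, conj_ofReal, Finset.mul_sum]
  refine Finset.sum_congr rfl fun k _ => ?_
  field_simp

open Complex in
theorem Wprof_windingNumber_one_periodic :
    Periodic (Wprof a M g θs (windingNumber a θs) 1) (2 * π) := by
  intro θ
  simp only [Wprof, windingNumber_one_add_two_pi]
  congr 1
  · rw [ofReal_add, mul_add, Complex.exp_add,
      show I * ((2 * π : ℝ) : ℂ) = 2 * π * I by push_cast; ring, exp_two_pi_mul_I, mul_one]
  refine Finset.sum_congr rfl fun k _ => ?_
  congr 2
  simp only [mul_div_assoc', mul_assoc, ← Complex.exp_add]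
  congr 2
  push_cast
  ring

theorem measurable_Wprof_windingNumber_one :
    Measurable (Wprof a M g θs (windingNumber a θs) 1) := by
  unfold Wprof windingNumber
  fun_prop

open Complex in
theorem norm_Wprof_windingNumber_one_le (ha : 0 < a) (θ : ℝ) :
    ‖Wprof a M g θs (windingNumber a θs) 1 θ‖ ≤
      ∑ k, ‖2 * (a : ℂ) * (g k : ℂ) / ((a : ℂ) - I)‖ /
        ‖1 - exp (2 * π * Aconst a)‖ := by
  rw [Wprof, norm_mul, norm_exp_I_mul_ofReal, one_mul]
  refine (norm_sum_le _ _).trans (Finset.sum_le_sum fun k _ => ?_)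
  have hdecay : ‖exp (Aconst a * ((θs k : ℂ) - (θ : ℂ)))‖ *
      ‖exp (2 * π * (windingNumber a θs 1 θ k : ℂ) * Aconst a)‖ ≤ 1 := by
    rw [← norm_mul, ← Complex.exp_add, norm_exp, Real.exp_le_one_iff]
    have hre : (Aconst a * ((θs k : ℂ) - (θ : ℂ)) +
        2 * π * (windingNumber a θs 1 θ k : ℂ) * Aconst a).re =
          (Aconst a).re * (2 * π * windingNumber a θs 1 θ k - (θ - θs k)) := by
      simp only [add_re, mul_re, sub_re, ofReal_re, sub_im, ofReal_im, sub_self, mul_zero, sub_zero,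
        re_ofNat, im_ofNat, intCast_re, mul_im, zero_mul, add_zero, intCast_im]
      ring
    rw [hre]
    exact mul_nonpos_of_nonpos_of_nonneg (Aconst_re_neg ha).le
      (sub_nonneg.mpr (lt_two_pi_mul_windingNumber_one θs θ k).le)
  calc _ = ‖2 * (a : ℂ) * (g k : ℂ) / ((a : ℂ) - I)‖ / ‖1 - exp (2 * π * Aconst a)‖ *
        (‖exp (Aconst a * ((θs k : ℂ) - (θ : ℂ)))‖ *
          ‖exp (2 * π * (windingNumber a θs 1 θ k : ℂ) * Aconst a)‖) := by
        simp only [Real.log_one, ofReal_zero, ofReal_one, mul_zero, Complex.exp_zero, one_mul,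
          norm_mul, norm_conj, norm_div]
        ring
    _ ≤ _ := mul_le_of_le_one_right (by positivity) hdecay

theorem intervalIntegrable_norm_sq_Wprof_windingNumber_one (ha : 0 < a) (t₁ t₂ : ℝ) :
    IntervalIntegrable (fun θ => ‖Wprof a M g θs (windingNumber a θs) 1 θ‖ ^ 2) volume
      t₁ t₂ := by
  set C := ∑ k, ‖2 * (a : ℂ) * (g k : ℂ) / ((a : ℂ) - Complex.I)‖ /
    ‖1 - Complex.exp (2 * π * Aconst a)‖
  refine (intervalIntegrable_const (c := C ^ 2)).mono_fun'
    ((measurable_Wprof_windingNumber_one g θs).norm.pow_const 2).aestronglyMeasurable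
    (Filter.Eventually.of_forall fun θ => ?_)
  dsimp only
  rw [norm_pow, norm_norm]
  exact pow_le_pow_left₀ (norm_nonneg _) (norm_Wprof_windingNumber_one_le g θs ha θ) 2

end Profile

theorem Wprof_energy_identity (a : ℝ) (ha : 0 < a) (M : ℕ)
    (g θs : Fin M → ℝ) (J : ℝ → ℝ → Fin M → ℤ)
    (hJ : ∀ (r θ : ℝ) (k : Fin M), 0 < r →
      IsLeast {j : ℤ | 0 < a * (2 * Real.pi * (j : ℝ) + θs k - θ) + Real.log r} (J r θ k))
    (R : ℝ) (hR : 0 < R) :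
    (∫ z in Metric.ball (0 : ℂ) R,
        ‖Wprof a M g θs J ‖z‖ (Complex.arg z)‖ ^ 2) =
      R ^ 4 / 4 * ∫ θ' in (0 : ℝ)..(2 * Real.pi),
        ‖Wprof a M g θs J 1 θ'‖ ^ 2 := by
  set W₁ := Wprof a M g θs (windingNumber a θs) 1
  have hscale : ∀ z : ℂ, z ≠ 0 → ‖Wprof a M g θs J ‖z‖ z.arg‖ ^ 2 =
      ‖z‖ ^ 2 * ‖W₁ (z.arg - Real.log ‖z‖ / a)‖ ^ 2 := by
    intro z hz
    have hr := norm_pos_iff.mpr hz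
    rw [Wprof_congr_windingNumber g θs ha hJ hr, Wprof_windingNumber_eq_scale g θs ha.ne' hr,
      norm_mul, norm_mul, Complex.norm_exp_I_mul_ofReal, one_mul, Complex.norm_of_nonneg hr.le,
      mul_pow]
  rw [integral_ball_eq_of_eq_norm_pow_mul 2
    ((measurable_Wprof_windingNumber_one g θs).norm.pow_const 2)
    ((Wprof_windingNumber_one_periodic g θs).comp fun w => ‖w‖ ^ 2)
    (intervalIntegrable_norm_sq_Wprof_windingNumber_one g θs ha 0 (2 * π))
    (Real.measurable_log.div_const a) hscale hR.le]
  simp only [Wprof_congr_windingNumber g θs ha hJ one_pos]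
  congr 1
  norm_num
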